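/- arXiv:1208.2444 — 3 statements merged into one kernel-verified Lean document; each statement's English description precedes it below -/
import Mathlib

section
/- Let A be a C*-algebra, let a ∈ A be positive, and let ε > 0. If b ∈ A is positive with ‖a − b‖ < ε, then (a − ε)₊ ≼ b (Cuntz subequivalence). In particular, for positive a and δ, ε > 0, ((a − δ)₊ − ε)₊ = (a − (δ + ε))₊. -/
open Filter

/-- Cuntz subequivalence: `a ≼ b` iff there is a sequence `xₙ` with `‖a - xₙ b xₙ*‖ → 0`. -/
def CuntzLE {A : Type*} [NonUnitalRing A] [Star A] [Norm A] (a b : A) : Prop :=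
  ∃ x : ℕ → A, Tendsto (fun n => ‖a - x n * b * star (x n)‖) atTop (nhds 0)

/-!
Put `r = ‖a - b‖ < ε`. Then `a - r ≤ b`, and `(a - ε)₊ = h(a) (a - r) h(a)` for the continuous
function `h t = √((t - ε)₊ / max (t - r) (ε - r))`, so `(a - ε)₊ ≤ h(a) b h(a)`. It remains to see
that `0 ≤ c ≤ d` implies `c ≼ d`: for `s > 0` put `u = (d + s)^(-1/2)` and `x = c^(1/2) u`. Then
`c - x d x* = c^(1/2) (s u²) c^(1/2)`, and the C⋆-identity together with `c ≤ d` bounds its norm by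
`s ‖u d u‖ ≤ s`. The second claim is the scalar identity `((t - δ)₊ - ε)₊ = (t - (δ + ε))₊`.
-/

lemma cuntzLE_of_forall_exists_norm_sub_le {A : Type*} [NonUnitalSeminormedRing A] [Star A]
    {a b : A} (h : ∀ s : ℝ, 0 < s → ∃ x : A, ‖a - x * b * star x‖ ≤ s) : CuntzLE a b := by
  choose! x hx using h
  exact ⟨fun n => x (1 / (n + 1)), squeeze_zero (fun _ => norm_nonneg _)
    (fun _ => hx _ (by positivity)) tendsto_one_div_add_atTop_nhds_zero_nat⟩

lemma CuntzLE.of_conj {A : Type*} [NonUnitalRing A] [StarRing A] [Norm A] {a b y : A}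
    (h : CuntzLE a (y * b * star y)) : CuntzLE a b := by
  obtain ⟨x, hx⟩ := h
  exact ⟨fun n => x n * y, by simpa only [star_mul, mul_assoc] using hx⟩

section CFC

variable {A : Type*} [Ring A] [StarRing A] [TopologicalSpace A] [Algebra ℝ A]
  [ContinuousFunctionalCalculus ℝ A IsSelfAdjoint]

lemma cfc_posPart_eq_conj_sub_algebraMap {a : A} (ha : IsSelfAdjoint a) {r ε : ℝ} (hrε : r < ε) :
    cfc (fun t : ℝ => max (t - ε) 0) a
      = cfc (fun t : ℝ => √(max (t - ε) 0 / max (t - r) (ε - r))) a * (a - algebraMap ℝ A r)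
        * cfc (fun t : ℝ => √(max (t - ε) 0 / max (t - r) (ε - r))) a := by
  set h : ℝ → ℝ := fun t => √(max (t - ε) 0 / max (t - r) (ε - r))
  have h_cont : Continuous h := Real.continuous_sqrt.comp <|
    Continuous.div (by fun_prop) (by fun_prop) fun t => (lt_max_of_lt_right (sub_pos.2 hrε)).ne'
  have h_conj : ∀ t, h t * (t - r) * h t = max (t - ε) 0 := by
    intro t
    rcases le_or_gt t ε with ht | ht
    · simp [h, max_eq_right (sub_nonpos.2 ht)]
    · have htr : 0 < t - r := by linarith
      have h_sq : h t * h t = (t - ε) / (t - r) := by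
        simp only [h, max_eq_left (sub_pos.2 ht).le, max_eq_left (by linarith : ε - r ≤ t - r)]
        exact Real.mul_self_sqrt (div_nonneg (by linarith) htr.le)
      rw [mul_right_comm, h_sq, div_mul_cancel₀ _ htr.ne', max_eq_left (sub_pos.2 ht).le]
  have h_sub : cfc (fun t : ℝ => t - r) a = a - algebraMap ℝ A r := by
    rw [cfc_sub (fun t : ℝ => t) (fun _ => r) a, cfc_id' ℝ a, cfc_const r a]
  rw [← h_sub, ← cfc_mul h _ a h_cont.continuousOn,
    ← cfc_mul (fun t => h t * (t - r)) h a (h_cont.mul (by fun_prop)).continuousOn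
      h_cont.continuousOn]
  exact cfc_congr fun t _ => (h_conj t).symm

lemma cfc_posPart_sub_posPart_sub [ContinuousMap.UniqueHom ℝ A] {a : A} (ha : IsSelfAdjoint a)
    (δ : ℝ) {ε : ℝ} (hε : 0 ≤ ε) :
    cfc (fun t : ℝ => max (t - ε) 0) (cfc (fun t : ℝ => max (t - δ) 0) a)
      = cfc (fun t : ℝ => max (t - (δ + ε)) 0) a := by
  rw [← cfc_comp' (fun t : ℝ => max (t - ε) 0) (fun t : ℝ => max (t - δ) 0) a]
  refine cfc_congr fun t _ => ?_
  rw [← max_sub_sub_right, max_assoc, zero_sub, max_eq_right (neg_nonpos.2 hε), sub_sub]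

end CFC

section CStarAlgebra

variable {A : Type*} [CStarAlgebra A] [PartialOrder A] [StarOrderedRing A]

lemma norm_conj_mul_self_le {r d b : A} (hr : IsSelfAdjoint r) (hd : IsSelfAdjoint d)
    (hrb : r * r ≤ b) : ‖r * (d * d) * r‖ ≤ ‖d * b * d‖ := by
  have h_swap : ‖r * (d * d) * r‖ = ‖d * (r * r) * d‖ :=
    calc ‖r * (d * d) * r‖ = ‖star (d * r) * (d * r)‖ := by
          rw [star_mul, hr.star_eq, hd.star_eq]; noncomm_ring
      _ = ‖(d * r) * star (d * r)‖ := by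
          rw [CStarRing.norm_star_mul_self, CStarRing.norm_self_mul_star]
      _ = ‖d * (r * r) * d‖ := by
          rw [star_mul, hr.star_eq, hd.star_eq]; noncomm_ring
  rw [h_swap]
  exact CStarAlgebra.norm_le_norm_of_nonneg_of_le (hd.conjugate_nonneg hr.mul_self_nonneg)
    (hd.conjugate_le_conjugate hrb)

section InvSqrt

variable {b : A} {s : ℝ}

lemma continuousOn_inv_sqrt_add (hb : 0 ≤ b) (hs : 0 < s) :
    ContinuousOn (fun t : ℝ => (√(t + s))⁻¹) (spectrum ℝ b) :=
  ContinuousOn.inv₀ (by fun_prop) fun t ht =>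
    (Real.sqrt_pos.2 (by linarith [spectrum_nonneg_of_nonneg hb ht])).ne'

lemma cfc_inv_sqrt_add_conj (hb : 0 ≤ b) (hs : 0 < s) :
    cfc (fun t : ℝ => (√(t + s))⁻¹) b * b * cfc (fun t : ℝ => (√(t + s))⁻¹) b
      = cfc (fun t : ℝ => t / (t + s)) b := by
  have hu := continuousOn_inv_sqrt_add hb hs
  nth_rw 2 [← cfc_id' ℝ b]
  rw [← cfc_mul _ (fun t : ℝ => t) b hu (continuousOn_id' _),
    ← cfc_mul (fun t : ℝ => (√(t + s))⁻¹ * t) _ b (hu.mul (continuousOn_id' _)) hu]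
  refine cfc_congr fun t ht => ?_
  rw [mul_comm _ t, mul_assoc, ← mul_inv,
    Real.mul_self_sqrt (by linarith [spectrum_nonneg_of_nonneg hb ht]), div_eq_mul_inv]

lemma norm_cfc_inv_sqrt_add_conj_le_one (hb : 0 ≤ b) (hs : 0 < s) :
    ‖cfc (fun t : ℝ => (√(t + s))⁻¹) b * b * cfc (fun t : ℝ => (√(t + s))⁻¹) b‖ ≤ 1 := by
  rw [cfc_inv_sqrt_add_conj hb hs]
  refine norm_cfc_le zero_le_one fun t ht => ?_
  have ht : 0 ≤ t := spectrum_nonneg_of_nonneg hb ht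
  rw [Real.norm_of_nonneg (by positivity)]
  exact div_le_one_of_le₀ (by linarith) (by positivity)

lemma cfc_inv_sqrt_add_conj_add_smul_mul_self (hb : 0 ≤ b) (hs : 0 < s) :
    cfc (fun t : ℝ => (√(t + s))⁻¹) b * b * cfc (fun t : ℝ => (√(t + s))⁻¹) b
      + s • (cfc (fun t : ℝ => (√(t + s))⁻¹) b * cfc (fun t : ℝ => (√(t + s))⁻¹) b) = 1 := by
  have hu := continuousOn_inv_sqrt_add hb hs
  set u := cfc (fun t : ℝ => (√(t + s))⁻¹) b
  have h_add : u * b * u + s • (u * u) = u * cfc (fun t : ℝ => t + s) b * u := by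
    rw [cfc_add (a := b) (fun t : ℝ => t) (fun _ => s) (continuousOn_id' _) continuousOn_const,
      cfc_id' ℝ b, cfc_const s b, Algebra.algebraMap_eq_smul_one, mul_add, add_mul,
      mul_smul_comm, smul_mul_assoc, mul_one]
  rw [h_add, ← cfc_mul _ (fun t : ℝ => t + s) b hu (by fun_prop),
    ← cfc_mul (fun t : ℝ => (√(t + s))⁻¹ * (t + s)) _ b (hu.mul (by fun_prop)) hu,
    ← cfc_const_one ℝ b]
  refine cfc_congr fun t ht => ?_
  have hts : 0 < t + s := by linarith [spectrum_nonneg_of_nonneg hb ht]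
  field_simp
  exact (Real.sq_sqrt hts.le).symm

end InvSqrt

lemma norm_sub_conj_inv_sqrt_add_le {c b : A} (hc : 0 ≤ c) (hcb : c ≤ b) {s : ℝ} (hs : 0 < s) :
    ‖c - (CFC.sqrt c * cfc (fun t : ℝ => (√(t + s))⁻¹) b) * b
        * star (CFC.sqrt c * cfc (fun t : ℝ => (√(t + s))⁻¹) b)‖ ≤ s := by
  have hb : 0 ≤ b := hc.trans hcb
  have h_unit := cfc_inv_sqrt_add_conj_add_smul_mul_self hb hs
  have h_norm := norm_cfc_inv_sqrt_add_conj_le_one hb hs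
  set r := CFC.sqrt c
  set u := cfc (fun t : ℝ => (√(t + s))⁻¹) b
  have hr : IsSelfAdjoint r := (CFC.sqrt_nonneg c).isSelfAdjoint
  have hu : IsSelfAdjoint u := cfc_predicate _ _
  have hrr : r * r = c := CFC.sqrt_mul_sqrt_self c hc
  have h_sq : (√s • u) * (√s • u) = s • (u * u) := by
    rw [smul_mul_smul, Real.mul_self_sqrt hs.le]
  have h_rem : c - (r * u) * b * star (r * u) = r * ((√s • u) * (√s • u)) * r := by
    rw [h_sq, eq_sub_of_add_eq' h_unit, star_mul, hu.star_eq, hr.star_eq, ← hrr]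
    noncomm_ring
  calc ‖c - (r * u) * b * star (r * u)‖ = ‖r * ((√s • u) * (√s • u)) * r‖ := by rw [h_rem]
    _ ≤ ‖(√s • u) * b * (√s • u)‖ :=
        norm_conj_mul_self_le hr ((IsSelfAdjoint.all _).smul hu) (hrr ▸ hcb)
    _ = s * ‖u * b * u‖ := by
        rw [smul_mul_assoc, mul_smul_comm, smul_mul_assoc, smul_smul, Real.mul_self_sqrt hs.le,
          norm_smul, Real.norm_of_nonneg hs.le]
    _ ≤ s := mul_le_of_le_one_right hs.le h_norm

lemma cuntzLE_of_le {c b : A} (hc : 0 ≤ c) (hcb : c ≤ b) : CuntzLE c b :=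
  cuntzLE_of_forall_exists_norm_sub_le fun _ hs => ⟨_, norm_sub_conj_inv_sqrt_add_le hc hcb hs⟩

lemma IsSelfAdjoint.sub_algebraMap_norm_sub_le {a b : A} (ha : IsSelfAdjoint a)
    (hb : IsSelfAdjoint b) : a - algebraMap ℝ A ‖a - b‖ ≤ b :=
  sub_le_comm.mp (ha.sub hb).le_algebraMap_norm_self

lemma cuntzLE_cfc_posPart_of_norm_sub_lt {a b : A} (ha : IsSelfAdjoint a) (hb : 0 ≤ b) {ε : ℝ}
    (hab : ‖a - b‖ < ε) : CuntzLE (cfc (fun t : ℝ => max (t - ε) 0) a) b := by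
  set h := cfc (fun t : ℝ => √(max (t - ε) 0 / max (t - ‖a - b‖) (ε - ‖a - b‖))) a
  have hh : IsSelfAdjoint h := cfc_predicate _ _
  have hle : cfc (fun t : ℝ => max (t - ε) 0) a ≤ h * b * star h := by
    rw [cfc_posPart_eq_conj_sub_algebraMap ha hab, hh.star_eq]
    exact hh.conjugate_le_conjugate (ha.sub_algebraMap_norm_sub_le hb.isSelfAdjoint)
  exact (cuntzLE_of_le (cfc_nonneg fun _ _ => le_max_right _ _) hle).of_conj

end CStarAlgebra

theorem posPart_cuntzLE_general {A : Type*} [CStarAlgebra A] [PartialOrder A] [StarOrderedRing A]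
    (a : A) (ha : 0 ≤ a) (ε : ℝ) :
    (∀ b : A, 0 ≤ b → ‖a - b‖ < ε → CuntzLE (cfc (fun t : ℝ => max (t - ε) 0) a) b) ∧
      (∀ δ ε' : ℝ, 0 < δ → 0 < ε' →
        cfc (fun t : ℝ => max (t - ε') 0) (cfc (fun t : ℝ => max (t - δ) 0) a)
          = cfc (fun t : ℝ => max (t - (δ + ε')) 0) a) :=
  ⟨fun _ hb hab => cuntzLE_cfc_posPart_of_norm_sub_lt ha.isSelfAdjoint hb hab,
    fun δ _ _ hε' => cfc_posPart_sub_posPart_sub ha.isSelfAdjoint δ hε'.le⟩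

/-- If `a, b` are positive with `‖a − b‖ < ε`, then `(a − ε)₊ ≼ b`; moreover for positive `a`
and `δ, ε > 0` one has `((a − δ)₊ − ε)₊ = (a − (δ + ε))₊`.  Here `(a - ε)₊` is the
functional-calculus positive part `cfc (fun t => max (t - ε) 0) a`. -/
theorem posPart_cuntzLE {A : Type*} [CStarAlgebra A] [PartialOrder A] [StarOrderedRing A]
    (a : A) (ha : 0 ≤ a) (ε : ℝ) (hε : 0 < ε) :
    (∀ b : A, 0 ≤ b → ‖a - b‖ < ε → CuntzLE (cfc (fun t : ℝ => max (t - ε) 0) a) b) ∧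
      (∀ δ ε' : ℝ, 0 < δ → 0 < ε' →
        cfc (fun t : ℝ => max (t - ε') 0) (cfc (fun t : ℝ => max (t - δ) 0) a)
          = cfc (fun t : ℝ => max (t - (δ + ε')) 0) a) :=
  posPart_cuntzLE_general a ha ε
end

section
/- Let A be a unital C*-algebra and suppose a ∈ A is a positive element for which there exist ℓ ∈ ℕ and c₁, …, c_ℓ ∈ A with Σ_{k=1}^ℓ c_k* a c_k = 1. Then for every tracial state τ on A, d_τ(a) ≥ 1/ℓ. -/
/-!
Put `y_k = a^{1/2} c_k`, so that `∑ y_k* y_k = 1` and `y_k y_k* ≤ M a` with `M = 1 + ∑ ‖c_k‖²`.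
For `0 ≤ e ≤ 1`, `y_k* y_k ≤ 1` gives `y_k* y_k ≤ (y_k* y_k)^e`; a trace cannot tell `f(y* y)` from
`f(y y*)` (for polynomials by the trace property, in general by Weierstrass approximation on the
spectra), and `t ↦ t^e` is operator monotone. Hence
`1 ≤ ∑ τ((y_k y_k*)^e) ≤ ℓ τ((M a)^e) = ℓ M^e τ(a^e)`, and `e = 1/n → 0` gives `1 ≤ ℓ d`.
-/

open Filter Set Polynomial Finset
open scoped ComplexOrder

namespace CFC

variable {A : Type*} [CStarAlgebra A] [PartialOrder A] [StarOrderedRing A]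

lemma smul_rpow {r : ℝ} (hr : 0 ≤ r) {a : A} (ha : 0 ≤ a) {e : ℝ} (he : 0 ≤ e) :
    (r • a) ^ e = r ^ e • a ^ e := by
  rw [rpow_eq_cfc_real (smul_nonneg hr ha), rpow_eq_cfc_real ha, ← cfc_comp_smul r _ a,
    ← cfc_smul (r ^ e) _ a]
  refine cfc_congr fun t ht => ?_
  simp [Real.mul_rpow hr (spectrum_nonneg_of_nonneg ha ht)]

lemma le_rpow_of_le_one {a : A} (ha₀ : 0 ≤ a) (ha₁ : a ≤ 1) {e : ℝ} (he₀ : 0 ≤ e) (he₁ : e ≤ 1) :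
    a ≤ a ^ e := by
  have hσ : ∀ t ∈ spectrum ℝ a, t ≤ 1 := by
    simpa using (le_algebraMap_iff_spectrum_le (r := (1 : ℝ)) (a := a)).mp (by simpa using ha₁)
  rw [rpow_eq_cfc_real ha₀]
  conv_lhs => rw [← cfc_id' ℝ a]
  exact (cfc_le_iff _ _ a).mpr fun t ht =>
    Real.self_le_rpow_of_le_one (spectrum_nonneg_of_nonneg ha₀ ht) (hσ t ht) he₁

end CFC

lemma apply_pow_mul_comm {A M : Type*} [Monoid A] (τ : A → M)
    (hτtr : ∀ x y : A, τ (x * y) = τ (y * x)) (x y : A) (m : ℕ) :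
    τ ((x * y) ^ m) = τ ((y * x) ^ m) := by
  have hsemi : SemiconjBy x (y * x) (x * y) := (mul_assoc _ _ _).symm
  cases m with
  | zero => simp
  | succ m => rw [pow_succ, ← mul_assoc, ← (hsemi.pow_right m).eq, mul_assoc, hτtr, mul_assoc,
      ← pow_succ]

lemma apply_aeval_mul_comm {R A M : Type*} [CommSemiring R] [Semiring A] [Algebra R A]
    [AddCommMonoid M] [Module R M] (τ : A →ₗ[R] M) (hτtr : ∀ x y : A, τ (x * y) = τ (y * x))
    (x y : A) (p : R[X]) : τ (aeval (x * y) p) = τ (aeval (y * x) p) := by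
  simp only [aeval_eq_sum_range, map_sum, map_smul, apply_pow_mul_comm τ hτtr]

section Trace

variable {A : Type*} [CStarAlgebra A] [PartialOrder A] [StarOrderedRing A] (τ : A →ₗ[ℂ] ℂ)

lemma re_apply_mono (hτpos : ∀ x : A, 0 ≤ x → 0 ≤ τ x) {x y : A} (h : x ≤ y) :
    (τ x).re ≤ (τ y).re := by
  simpa using (Complex.le_def.mp (hτpos _ (sub_nonneg.mpr h))).1

lemma abs_re_apply_le_norm (hτpos : ∀ x : A, 0 ≤ x → 0 ≤ τ x) (hτ1 : τ 1 = 1) {x : A}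
    (hx : IsSelfAdjoint x) : |(τ x).re| ≤ ‖x‖ := by
  have hτr : ∀ r : ℝ, (τ (algebraMap ℝ A r)).re = r := fun r => by
    simp [Algebra.algebraMap_eq_smul_one, LinearMap.map_smul_of_tower, hτ1]
  rw [abs_le]
  constructor
  · simpa [hτr] using re_apply_mono τ hτpos hx.neg_algebraMap_norm_le_self
  · simpa [hτr] using re_apply_mono τ hτpos hx.le_algebraMap_norm_self

lemma abs_re_apply_cfc_sub_aeval_le (hτpos : ∀ x : A, 0 ≤ x → 0 ≤ τ x) (hτ1 : τ 1 = 1)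
    {b : A} (hb : IsSelfAdjoint b) {f : ℝ → ℝ} (hf : ContinuousOn f (spectrum ℝ b))
    {p : ℝ[X]} {ε : ℝ} (hε : 0 ≤ ε) (hfp : ∀ t ∈ spectrum ℝ b, |f t - p.eval t| ≤ ε) :
    |(τ (cfc f b)).re - (τ (aeval b p)).re| ≤ ε := by
  have hsub : cfc f b - aeval b p = cfc (fun t => f t - p.eval t) b := by
    rw [cfc_sub f (fun t => p.eval t) b, cfc_polynomial p b]
  rw [← Complex.sub_re, ← map_sub, hsub]
  exact (abs_re_apply_le_norm τ hτpos hτ1 (cfc_predicate _ b)).trans (norm_cfc_le hε hfp)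

lemma re_apply_cfc_star_mul_self (hτpos : ∀ x : A, 0 ≤ x → 0 ≤ τ x) (hτ1 : τ 1 = 1)
    (hτtr : ∀ x y : A, τ (x * y) = τ (y * x)) (x : A) {f : ℝ → ℝ} (hf : Continuous f) :
    (τ (cfc f (star x * x))).re = (τ (cfc f (x * star x))).re := by
  set R := ‖x‖ * ‖x‖ * ‖(1 : A)‖
  have hσ : ∀ b : A, ‖b‖ = ‖x‖ * ‖x‖ → spectrum ℝ b ⊆ Icc (-R) R := fun b hb => by
    simpa [R, hb, Real.closedBall_eq_Icc] using spectrum.subset_closedBall_norm_mul (𝕜 := ℝ) b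
  refine eq_of_forall_dist_le fun ε hε => ?_
  obtain ⟨p, hp⟩ := exists_polynomial_near_of_continuousOn (-R) R f hf.continuousOn (ε / 2)
    (by positivity)
  have happrox : ∀ b : A, IsSelfAdjoint b → ‖b‖ = ‖x‖ * ‖x‖ →
      |(τ (cfc f b)).re - (τ (aeval b p)).re| ≤ ε / 2 := fun b hb hnorm =>
    abs_re_apply_cfc_sub_aeval_le τ hτpos hτ1 hb hf.continuousOn (by positivity)
      fun t ht => by simpa [abs_sub_comm] using (hp t (hσ b hnorm ht)).le
  have h₁ := happrox _ (.star_mul_self x) CStarRing.norm_star_mul_self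
  have h₂ := happrox _ (.mul_star_self x) CStarRing.norm_self_mul_star
  have hpoly : τ (aeval (star x * x) p) = τ (aeval (x * star x) p) :=
    apply_aeval_mul_comm (τ.restrictScalars ℝ) hτtr (star x) x p
  rw [hpoly] at h₁
  rw [Real.dist_eq]
  calc _ ≤ _ := abs_sub_le _ (τ (aeval (x * star x) p)).re _
    _ ≤ ε := by rw [abs_sub_comm] at h₂; linarith

lemma re_apply_rpow_star_mul_self (hτpos : ∀ x : A, 0 ≤ x → 0 ≤ τ x) (hτ1 : τ 1 = 1)
    (hτtr : ∀ x y : A, τ (x * y) = τ (y * x)) (x : A) {e : ℝ} (he : 0 ≤ e) :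
    (τ ((star x * x) ^ e)).re = (τ ((x * star x) ^ e)).re := by
  rw [CFC.rpow_eq_cfc_real (star_mul_self_nonneg x), CFC.rpow_eq_cfc_real (mul_star_self_nonneg x)]
  exact re_apply_cfc_star_mul_self τ hτpos hτ1 hτtr x (Real.continuous_rpow_const he)

lemma one_le_card_mul_re_apply_rpow (hτpos : ∀ x : A, 0 ≤ x → 0 ≤ τ x) (hτ1 : τ 1 = 1)
    (hτtr : ∀ x y : A, τ (x * y) = τ (y * x)) {a : A} (ha : 0 ≤ a) {ι : Type*} [Fintype ι]
    {c : ι → A} (hfull : ∑ k, star (c k) * a * c k = 1) {M : ℝ} (hM₀ : 0 ≤ M)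
    (hM : ∀ k, ‖c k‖ ^ 2 ≤ M) {e : ℝ} (he₀ : 0 ≤ e) (he₁ : e ≤ 1) :
    1 ≤ Fintype.card ι * (M ^ e * (τ (a ^ e)).re) := by
  set s := CFC.sqrt a
  have hs : IsSelfAdjoint s := .of_nonneg (CFC.sqrt_nonneg a)
  have hss : s * s = a := CFC.sqrt_mul_sqrt_self a
  set y : ι → A := fun k => s * c k
  have hyy : ∀ k, star (y k) * y k = star (c k) * a * c k := fun k => by
    simp only [y, star_mul, hs.star_eq, ← hss, mul_assoc]
  have hyy_le : ∀ k, star (y k) * y k ≤ 1 := fun k => by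
    rw [← hfull, hyy]
    exact single_le_sum (fun j _ => hyy j ▸ star_mul_self_nonneg (y j)) (mem_univ k)
  have hyy'_le : ∀ k, y k * star (y k) ≤ M • a := fun k =>
    calc y k * star (y k) = s * (c k * star (c k)) * star s := by simp [y, mul_assoc]
      _ ≤ ‖c k * star (c k)‖ • (s * star s) :=
        CStarAlgebra.star_right_conjugate_le_norm_smul (.mul_star_self _)
      _ = ‖c k‖ ^ 2 • a := by rw [CStarRing.norm_self_mul_star, hs.star_eq, hss, sq]
      _ ≤ M • a := smul_le_smul_of_nonneg_right (hM k) ha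
  calc (1 : ℝ) = ∑ k, (τ (star (y k) * y k)).re := by
        simp only [hyy, ← Complex.re_sum, ← map_sum, hfull, hτ1, Complex.one_re]
    _ ≤ ∑ k, (τ ((star (y k) * y k) ^ e)).re := sum_le_sum fun k _ =>
        re_apply_mono τ hτpos (CFC.le_rpow_of_le_one (star_mul_self_nonneg _) (hyy_le k) he₀ he₁)
    _ = ∑ k, (τ ((y k * star (y k)) ^ e)).re := sum_congr rfl fun k _ =>
        re_apply_rpow_star_mul_self τ hτpos hτ1 hτtr (y k) he₀
    _ ≤ ∑ _k : ι, (τ ((M • a) ^ e)).re := sum_le_sum fun k _ =>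
        re_apply_mono τ hτpos (CFC.rpow_le_rpow ⟨he₀, he₁⟩ (hyy'_le k))
    _ = Fintype.card ι * (M ^ e * (τ (a ^ e)).re) := by
        simp [CFC.smul_rpow hM₀ ha he₀, LinearMap.map_smul_of_tower]

end Trace

/-- If `a` is a positive element of a unital C*-algebra with `Σ_{k} cₖ* a cₖ = 1` for some
`c₁, …, c_ℓ`, then `d_τ(a) ≥ 1/ℓ` for every tracial state `τ`, where
`d_τ(a) = lim_n τ(a^{1/n})` (the limit value `d` being quantified via `Tendsto`). -/
theorem dimension_function_ge_of_full {A : Type*} [CStarAlgebra A]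
    [PartialOrder A] [StarOrderedRing A]
    (a : A) (ha : 0 ≤ a) (ℓ : ℕ) (c : Fin ℓ → A)
    (hfull : ∑ k, star (c k) * a * c k = 1)
    (τ : A →ₗ[ℂ] ℂ) (hτpos : ∀ x : A, 0 ≤ x → 0 ≤ τ x) (hτ1 : τ 1 = 1)
    (hτtr : ∀ x y : A, τ (x * y) = τ (y * x)) (d : ℝ)
    (hd : Tendsto (fun n : ℕ => (τ (cfc (fun t : ℝ => t ^ ((1:ℝ) / n)) a)).re)
      atTop (nhds d)) :
    1 / (ℓ : ℝ) ≤ d := by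
  set M := 1 + ∑ k, ‖c k‖ ^ 2
  have hM : 0 < M := by positivity
  have hbound : ∀ n : ℕ, 0 < n →
      1 ≤ ℓ * (M ^ ((1 : ℝ) / n) * (τ (cfc (fun t : ℝ => t ^ ((1 : ℝ) / n)) a)).re) := by
    intro n hn
    rw [← CFC.rpow_eq_cfc_real ha]
    simpa using one_le_card_mul_re_apply_rpow τ hτpos hτ1 hτtr ha hfull hM.le (e := 1 / n)
      (fun k => le_add_of_nonneg_of_le zero_le_one
        (single_le_sum (fun j _ => sq_nonneg ‖c j‖) (mem_univ k)))
      (by positivity) (div_le_one_of_le₀ (by exact_mod_cast hn) n.cast_nonneg)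
  have hMroot : Tendsto (fun n : ℕ => M ^ ((1 : ℝ) / n)) atTop (nhds 1) := by
    simpa [Function.comp_def] using (Real.continuousAt_const_rpow hM.ne').tendsto.comp
      tendsto_one_div_atTop_nhds_zero_nat
  have hlim : 1 ≤ ℓ * (1 * d) :=
    ge_of_tendsto (tendsto_const_nhds.mul (hMroot.mul hd)) ((eventually_gt_atTop 0).mono hbound)
  obtain rfl | hℓ := Nat.eq_zero_or_pos ℓ
  · norm_num at hlim
  · rw [div_le_iff₀ (by positivity)]
    linarith
end

section
/- Let A be a unital C*-algebra, e₁, …, e_k pairwise orthogonal positive contractions in A, and a tracial state τ on A such that α^m fixes τ for an automorphism α with ‖α(eᵢ) − e_{i+1}‖ < δ for all 1 ≤ i ≤ k−1. Then for all i with 1 ≤ i ≤ k − m: d_τ((eᵢ − mδ)₊) ≤ d_τ(e_{i+m}). -/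
/-!
Iterating the estimate through the isometry `α` gives `‖α^m(eᵢ) − e_{i+m}‖ < mδ`, and `τ` is
`α^m`-invariant, so it suffices to show `τ(ψ(p)) ≤ d_τ(b)` whenever `‖p − b‖ < ε` and `ψ`
vanishes on `(−∞, ε]`. Such a `ψ(p)` is dominated by `w*w` for some `w` with `ww* ≤ λb`.
The resolvent `t ↦ t / (t + η)` is operator monotone, takes the same trace at `w*w` and at `ww*`,
and at `λb` its trace is at most `d_τ(b)`, because it is bounded both by `1` and by `λt/η`.
Letting `η → 0` gives the claim.
-/

open Filter Topology
open scoped ComplexOrder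

theorem dist_iterate_lt_of_dist_lt {X : Type*} [PseudoMetricSpace X] {T : X → X}
    (hT : LipschitzWith 1 T) {u : ℕ → X} {δ : ℝ} {k : ℕ}
    (hu : ∀ j, j + 1 < k → dist (T (u j)) (u (j + 1)) < δ) {i m : ℕ} (hm : 0 < m)
    (him : i + m < k) : dist (T^[m] (u i)) (u (i + m)) < m * δ := by
  induction m, hm using Nat.le_induction with
  | base => simpa using hu i him
  | succ m hm ih =>
    calc dist (T^[m + 1] (u i)) (u (i + (m + 1)))
        ≤ dist (T (T^[m] (u i))) (T (u (i + m))) + dist (T (u (i + m))) (u (i + m + 1)) := by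
          rw [Function.iterate_succ_apply', ← add_assoc]; exact dist_triangle _ _ _
      _ ≤ dist (T^[m] (u i)) (u (i + m)) + dist (T (u (i + m))) (u (i + m + 1)) := by
          gcongr; simpa using hT.dist_le_mul (T^[m] (u i)) (u (i + m))
      _ < m * δ + δ := add_lt_add (ih (by omega)) (hu _ (by omega))
      _ = (m + 1 : ℕ) * δ := by push_cast; ring

theorem map_ringInverse_one_add_mul_comm {A M F : Type*} [Ring A] [AddCommGroup M]
    [FunLike F A M] [AddMonoidHomClass F A M] (τ : F) (hτ : ∀ x y : A, τ (x * y) = τ (y * x))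
    {x y : A} (hxy : IsUnit (1 + x * y)) (hyx : IsUnit (1 + y * x)) :
    τ (Ring.inverse (1 + x * y)) = τ (Ring.inverse (1 + y * x)) := by
  set u := Ring.inverse (1 + x * y)
  set v := Ring.inverse (1 + y * x)
  have hu : u = 1 - x * y * u := by
    rw [eq_sub_iff_add_eq, ← one_add_mul, Ring.mul_inverse_cancel _ hxy]
  have hv : v = 1 - y * x * v := by
    rw [eq_sub_iff_add_eq, ← one_add_mul, Ring.mul_inverse_cancel _ hyx]
  have hux : u * x = x * v := calc
    u * x = u * x * ((1 + y * x) * v) := by rw [Ring.mul_inverse_cancel _ hyx, mul_one]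
    _ = u * (1 + x * y) * (x * v) := by noncomm_ring
    _ = x * v := by rw [Ring.inverse_mul_cancel _ hxy, one_mul]
  have hcyc : τ (x * y * u) = τ (y * x * v) := by
    rw [mul_assoc, hτ, mul_assoc, hux, mul_assoc]
  rw [hu, hv, map_sub, map_sub, hcyc]

theorem continuousOn_one_sub_inv_one_add_mul {c : ℝ} (hc : 0 ≤ c) :
    ContinuousOn (fun t : ℝ => 1 - (1 + c * t)⁻¹) (Set.Ici 0) :=
  continuousOn_const.sub <| ContinuousOn.inv₀ (by fun_prop) fun t (ht : 0 ≤ t) => by positivity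

theorem one_sub_inv_one_add_le {u : ℝ} (hu : 0 ≤ u) : 1 - (1 + u)⁻¹ ≤ u := by
  rw [sub_le_iff_le_add, ← sub_le_iff_le_add', ← one_div, le_div_iff₀ (by positivity)]
  nlinarith

theorem tendsto_rpow_one_div_natCast {x : ℝ} (hx : 0 < x) :
    Tendsto (fun n : ℕ => x ^ ((1 : ℝ) / n)) atTop (𝓝 1) := by
  simpa [Function.comp_def] using ((Real.continuousAt_const_rpow hx.ne').tendsto.comp
    tendsto_one_div_atTop_nhds_zero_nat :)

theorem norm_algEquiv_pow_apply_sub_lt {A : Type*} [CStarAlgebra A] (α : A ≃ₐ[ℂ] A)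
    (hstar : ∀ x : A, α (star x) = star (α x)) {k : ℕ} (e : Fin k → A) {δ : ℝ}
    (hclose : ∀ (i : Fin k) (h : (i : ℕ) + 1 < k), ‖α (e i) - e ⟨(i : ℕ) + 1, h⟩‖ < δ)
    {i : Fin k} {m : ℕ} (hm : 0 < m) (him : (i : ℕ) + m < k) :
    ‖(α ^ m) (e i) - e ⟨(i : ℕ) + m, him⟩‖ < m * δ := by
  have hα : LipschitzWith 1 α := (NonUnitalStarAlgHom.isometry
    (StarAlgEquiv.ofAlgEquiv α hstar) (EquivLike.injective _)).lipschitz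
  have := dist_iterate_lt_of_dist_lt hα (δ := δ) (u := fun j => if h : j < k then e ⟨j, h⟩ else 0)
    (fun j hj => by simpa [dist_eq_norm, hj, (Nat.lt_succ_self j).trans hj] using hclose ⟨j, _⟩ hj)
    hm him
  simpa [dist_eq_norm, him, AlgEquiv.coe_pow] using this

section CStarAlgebra

variable {A : Type*} [CStarAlgebra A] [PartialOrder A] [StarOrderedRing A]

theorem isStrictlyPositive_one_add {a : A} (ha : 0 ≤ a) : IsStrictlyPositive (1 + a) :=
  isStrictlyPositive_add (.inl ⟨isStrictlyPositive_one, ha⟩)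

theorem one_sub_ringInverse_one_add_le {a b : A} (ha : 0 ≤ a) (hab : a ≤ b) :
    1 - Ring.inverse (1 + a) ≤ 1 - Ring.inverse (1 + b) :=
  sub_le_sub_left (CStarAlgebra.ringInverse_le_ringInverse (by gcongr)
    (isStrictlyPositive_one_add ha)) 1

theorem cfc_one_sub_inv_one_add_mul {a : A} (ha : 0 ≤ a) {c : ℝ} (hc : 0 ≤ c) :
    cfc (fun t : ℝ => 1 - (1 + c * t)⁻¹) a = 1 - Ring.inverse (1 + c • a) := by
  have hne : ∀ t ∈ spectrum ℝ a, 1 + c * t ≠ 0 := fun t ht => by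
    have := spectrum_nonneg_of_nonneg ha ht; positivity
  have hcont : ContinuousOn (fun t : ℝ => (1 + c * t)⁻¹) (spectrum ℝ a) :=
    ContinuousOn.inv₀ (by fun_prop) hne
  rw [cfc_sub (fun _ => 1) _ a continuousOn_const hcont, cfc_const_one ℝ a, cfc_inv _ a hne,
    cfc_const_add 1 _ a, cfc_const_mul_id c a, Algebra.algebraMap_eq_smul_one, one_smul]

theorem sub_inv_smul_one_le_one_sub_ringInverse {a : A} (ha₀ : 0 ≤ a) (ha₁ : a ≤ 1) {s : ℝ}
    (hs : 0 < s) : a - s⁻¹ • 1 ≤ 1 - Ring.inverse (1 + s • a) := by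
  have hsub : a - s⁻¹ • 1 = cfc (fun t : ℝ => t - s⁻¹) a := by
    rw [cfc_sub .., cfc_id' .., cfc_const .., Algebra.algebraMap_eq_smul_one]
  rw [hsub, ← cfc_one_sub_inv_one_add_mul ha₀ hs.le]
  rw [CFC.le_one_iff (R := ℝ) a] at ha₁
  refine cfc_mono (fun t ht => ?_) (hg := (continuousOn_one_sub_inv_one_add_mul hs.le).mono
    fun t ht => spectrum_nonneg_of_nonneg ha₀ ht)
  have ht₀ := spectrum_nonneg_of_nonneg ha₀ ht
  have ht₁ : 0 ≤ 1 - t := sub_nonneg.mpr (ha₁ t ht)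
  have : 1 - (1 + s * t)⁻¹ - (t - s⁻¹) = (s ^ 2 * t * (1 - t) + 1) / (s * (1 + s * t)) := by
    field_simp; ring
  rw [← sub_nonneg, this]
  exact div_nonneg (by positivity) (by positivity)

theorem exists_cfc_le_star_mul_self_and_mul_star_le {p b : A} (hp : IsSelfAdjoint p)
    (hb : 0 ≤ b) {ε' ε : ℝ} (hpb : p ≤ b + algebraMap ℝ A ε') (hε : ε' < ε) {ψ : ℝ → ℝ}
    (hψ : ContinuousOn ψ (spectrum ℝ p)) (hψ₀ : ∀ t ∈ spectrum ℝ p, 0 ≤ ψ t)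
    (hψ₁ : ∀ t ∈ spectrum ℝ p, ψ t ≤ 1) (hψε : ∀ t ∈ spectrum ℝ p, t ≤ ε → ψ t = 0) :
    ∃ w : A, cfc ψ p ≤ star w * w ∧ w * star w ≤ (ε - ε')⁻¹ • b := by
  have hgap : 0 < ε - ε' := sub_pos.mpr hε
  -- `ψ = G² (t - ε')` on the spectrum, and `G² ≤ (ε - ε')⁻¹` since the denominator is cut off
  set G : ℝ → ℝ := fun t => √(ψ t / max (t - ε') (ε - ε'))
  have hmax : ∀ t, 0 < max (t - ε') (ε - ε') := fun t => hgap.trans_le (le_max_right _ _)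
  have hG : ContinuousOn G (spectrum ℝ p) :=
    (hψ.div (by fun_prop) fun t _ => (hmax t).ne').sqrt
  have hGG : ∀ t ∈ spectrum ℝ p, G t * G t = ψ t / max (t - ε') (ε - ε') := fun t ht =>
    Real.mul_self_sqrt (div_nonneg (hψ₀ t ht) (hmax t).le)
  set r := cfc G p
  have hr : IsSelfAdjoint r := cfc_predicate G p
  have hψ_eq : cfc ψ p = r * (p - algebraMap ℝ A ε') * r := by
    have : ∀ t ∈ spectrum ℝ p, ψ t = G t * (t - ε') * G t := by
      intro t ht
      rw [mul_right_comm, hGG t ht]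
      rcases (hψ₀ t ht).eq_or_lt with h | h
      · rw [← h, zero_div, zero_mul]
      · have hεt : ε < t := not_le.mp fun h' => h.ne' (hψε t ht h')
        rw [max_eq_left (by linarith), div_mul_cancel₀ _ (by linarith)]
    rw [cfc_congr this, cfc_mul .., cfc_mul .., cfc_sub .., cfc_id' .., cfc_const ..]
  have hrr : r * r ≤ algebraMap ℝ A (ε - ε')⁻¹ := by
    rw [← cfc_mul .., cfc_le_algebraMap_iff ..]
    intro t ht
    rw [hGG t ht, ← one_div]
    exact div_le_div₀ zero_le_one (hψ₁ t ht) hgap (le_max_right _ _)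
  have hsb := (CFC.sqrt_nonneg b).isSelfAdjoint
  refine ⟨CFC.sqrt b * r, ?_, ?_⟩
  · have : star (CFC.sqrt b * r) * (CFC.sqrt b * r) = r * b * r := by
      rw [star_mul, hr.star_eq, hsb.star_eq, mul_assoc, ← mul_assoc (CFC.sqrt b),
        CFC.sqrt_mul_sqrt_self b hb, mul_assoc]
    rw [hψ_eq, this]
    exact hr.conjugate_le_conjugate (sub_le_iff_le_add.mpr hpb)
  · calc CFC.sqrt b * r * star (CFC.sqrt b * r) = CFC.sqrt b * (r * r) * CFC.sqrt b := by
          rw [star_mul, hr.star_eq, hsb.star_eq]; noncomm_ring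
      _ ≤ CFC.sqrt b * algebraMap ℝ A (ε - ε')⁻¹ * CFC.sqrt b := hsb.conjugate_le_conjugate hrr
      _ = (ε - ε')⁻¹ • b := by
          rw [Algebra.algebraMap_eq_smul_one, mul_smul_one, smul_mul_assoc,
            CFC.sqrt_mul_sqrt_self b hb]

section Trace

variable (τ : A →ₗ[ℂ] ℂ)

theorem re_le_re_of_le (hτpos : ∀ x : A, 0 ≤ x → 0 ≤ τ x) {a b : A} (hab : a ≤ b) :
    (τ a).re ≤ (τ b).re := by
  simpa using (Complex.le_def.mp (hτpos _ (sub_nonneg.mpr hab))).1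

theorem re_map_cfc_le_of_tendsto (hτpos : ∀ x : A, 0 ≤ x → 0 ≤ τ x) (hτ1 : τ 1 = 1) {b : A}
    (hb : 0 ≤ b) {h : ℝ → ℝ} (hh : ContinuousOn h (spectrum ℝ b)) {L : ℝ} (hL : 0 ≤ L)
    (h_le_one : ∀ t ∈ spectrum ℝ b, h t ≤ 1) (h_le_mul : ∀ t ∈ spectrum ℝ b, h t ≤ L * t)
    {d : ℝ}
    (hd : Tendsto (fun n : ℕ => (τ (cfc (fun t : ℝ => t ^ ((1 : ℝ) / n)) b)).re) atTop (𝓝 d)) :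
    (τ (cfc h b)).re ≤ d := by
  have key : ∀ t₀ > 0, (τ (cfc h b)).re ≤ d + L * t₀ := by
    intro t₀ ht₀
    have hn : ∀ n : ℕ, (τ (cfc h b)).re ≤
        (t₀ ^ ((1 : ℝ) / n))⁻¹ * (τ (cfc (fun t : ℝ => t ^ ((1 : ℝ) / n)) b)).re + L * t₀ := by
      intro n
      have hrpow : ContinuousOn (fun t : ℝ => t ^ ((1 : ℝ) / n)) (spectrum ℝ b) :=
        fun t _ => (Real.continuousAt_rpow_const _ _ (Or.inr (by positivity))).continuousWithinAt
      -- below `t₀` use `h ≤ L t`, above it use `h ≤ 1 ≤ (t / t₀) ^ (1 / n)`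
      have hle : cfc h b ≤
          cfc (fun t => (t₀ ^ ((1 : ℝ) / n))⁻¹ * t ^ ((1 : ℝ) / n) + L * t₀) b := by
        refine cfc_mono (fun t ht => ?_)
        have ht0 := spectrum_nonneg_of_nonneg hb ht
        rcases le_or_gt t t₀ with htt | htt
        · have : 0 ≤ (t₀ ^ ((1 : ℝ) / n))⁻¹ * t ^ ((1 : ℝ) / n) := by positivity
          nlinarith [h_le_mul t ht]
        · rw [← Real.inv_rpow ht₀.le, ← Real.mul_rpow (by positivity) ht0]
          have : 1 ≤ (t₀⁻¹ * t) ^ ((1 : ℝ) / n) :=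
            Real.one_le_rpow (by rw [inv_mul_eq_div, one_le_div ht₀]; exact htt.le) (by positivity)
          nlinarith [h_le_one t ht]
      refine (re_le_re_of_le τ hτpos hle).trans_eq ?_
      rw [cfc_add_const .., cfc_const_mul .., Algebra.algebraMap_eq_smul_one]
      simp [τ.map_smul_of_tower, hτ1]
    have hlim := ((tendsto_rpow_one_div_natCast ht₀).inv₀ one_ne_zero).mul hd |>.add_const (L * t₀)
    rw [inv_one, one_mul] at hlim
    exact ge_of_tendsto' hlim hn
  refine le_of_forall_pos_le_add fun ε hε => ?_
  have hkey := key (ε / (L + 1)) (by positivity)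
  have hsmall : L * (ε / (L + 1)) ≤ ε := by
    rw [mul_div_assoc', div_le_iff₀ (by positivity)]; nlinarith
  linarith

theorem re_map_le_of_le_star_mul_self (hτpos : ∀ x : A, 0 ≤ x → 0 ≤ τ x) (hτ1 : τ 1 = 1)
    (hτtr : ∀ x y : A, τ (x * y) = τ (y * x)) {a w b : A} (ha₀ : 0 ≤ a) (ha₁ : a ≤ 1)
    (haw : a ≤ star w * w) {c : ℝ} (hc : 0 ≤ c) (hb : 0 ≤ b) (hwb : w * star w ≤ c • b) {d : ℝ}
    (hd : Tendsto (fun n : ℕ => (τ (cfc (fun t : ℝ => t ^ ((1 : ℝ) / n)) b)).re) atTop (𝓝 d)) :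
    (τ a).re ≤ d := by
  have key : ∀ s > 0, (τ a).re - s⁻¹ ≤ d := by
    intro s hs
    have hsc : 0 ≤ s * c := by positivity
    calc (τ a).re - s⁻¹ = (τ (a - s⁻¹ • 1)).re := by simp [τ.map_smul_of_tower, hτ1]
      _ ≤ (τ (1 - Ring.inverse (1 + s • a))).re :=
          re_le_re_of_le τ hτpos (sub_inv_smul_one_le_one_sub_ringInverse ha₀ ha₁ hs)
      _ ≤ (τ (1 - Ring.inverse (1 + s • (star w * w)))).re :=
          re_le_re_of_le τ hτpos <| one_sub_ringInverse_one_add_le (smul_nonneg hs.le ha₀)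
            (smul_le_smul_of_nonneg_left haw hs.le)
      _ = (τ (1 - Ring.inverse (1 + s • (w * star w)))).re := by
          rw [map_sub, map_sub, ← smul_mul_assoc, ← mul_smul_comm,
            map_ringInverse_one_add_mul_comm τ hτtr]
          · rw [smul_mul_assoc]
            exact (isStrictlyPositive_one_add (smul_nonneg hs.le (star_mul_self_nonneg w))).isUnit
          · rw [mul_smul_comm]
            exact (isStrictlyPositive_one_add (smul_nonneg hs.le (mul_star_self_nonneg w))).isUnit
      _ ≤ (τ (1 - Ring.inverse (1 + (s * c) • b))).re := by
          refine re_le_re_of_le τ hτpos <| one_sub_ringInverse_one_add_le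
            (smul_nonneg hs.le (mul_star_self_nonneg w)) ?_
          rw [mul_smul]; exact smul_le_smul_of_nonneg_left hwb hs.le
      _ ≤ d := by
          rw [← cfc_one_sub_inv_one_add_mul hb hsc]
          refine re_map_cfc_le_of_tendsto τ hτpos hτ1 hb ?_ hsc (fun t ht => ?_)
            (fun t ht => ?_) hd
          · exact (continuousOn_one_sub_inv_one_add_mul hsc).mono
              fun t ht => spectrum_nonneg_of_nonneg hb ht
          · have := spectrum_nonneg_of_nonneg hb ht
            have : 0 ≤ (1 + s * c * t)⁻¹ := by positivity
            linarith
          · exact one_sub_inv_one_add_le (mul_nonneg hsc (spectrum_nonneg_of_nonneg hb ht))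
  refine le_of_forall_pos_le_add fun η hη => ?_
  simpa [sub_le_iff_le_add] using key η⁻¹ (inv_pos.mpr hη)

theorem re_map_cfc_le_of_norm_sub_lt (hτpos : ∀ x : A, 0 ≤ x → 0 ≤ τ x) (hτ1 : τ 1 = 1)
    (hτtr : ∀ x y : A, τ (x * y) = τ (y * x)) {p b : A} (hp : IsSelfAdjoint p) (hb : 0 ≤ b) {ε : ℝ}
    (hpb : ‖p - b‖ < ε) {ψ : ℝ → ℝ} (hψ : ContinuousOn ψ (spectrum ℝ p))
    (hψ₀ : ∀ t ∈ spectrum ℝ p, 0 ≤ ψ t) (hψ₁ : ∀ t ∈ spectrum ℝ p, ψ t ≤ 1)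
    (hψε : ∀ t ∈ spectrum ℝ p, t ≤ ε → ψ t = 0) {d : ℝ}
    (hd : Tendsto (fun n : ℕ => (τ (cfc (fun t : ℝ => t ^ ((1 : ℝ) / n)) b)).re) atTop (𝓝 d)) :
    (τ (cfc ψ p)).re ≤ d := by
  have hle : p ≤ b + algebraMap ℝ A ‖p - b‖ :=
    sub_le_iff_le_add'.mp (hp.sub hb.isSelfAdjoint).le_algebraMap_norm_self
  obtain ⟨w, hψw, hwb⟩ :=
    exists_cfc_le_star_mul_self_and_mul_star_le hp hb hle hpb hψ hψ₀ hψ₁ hψε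
  exact re_map_le_of_le_star_mul_self τ hτpos hτ1 hτtr (cfc_nonneg hψ₀) (cfc_le_one _ _ hψ₁) hψw
    (inv_nonneg.mpr (sub_nonneg.mpr hpb.le)) hb hwb hd

theorem re_map_cfc_rpow_posPart_le (hτpos : ∀ x : A, 0 ≤ x → 0 ≤ τ x) (hτ1 : τ 1 = 1)
    (hτtr : ∀ x y : A, τ (x * y) = τ (y * x)) {p b : A} (hp : IsSelfAdjoint p) (hp₁ : ‖p‖ ≤ 1)
    (hb : 0 ≤ b) {ε : ℝ} (hpb : ‖p - b‖ < ε) {n : ℕ} (hn : 0 < n) {d : ℝ}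
    (hd : Tendsto (fun n : ℕ => (τ (cfc (fun t : ℝ => t ^ ((1 : ℝ) / n)) b)).re) atTop (𝓝 d)) :
    (τ (cfc (fun t : ℝ => max (t - ε) 0 ^ ((1 : ℝ) / n)) p)).re ≤ d := by
  have hexp : (0 : ℝ) < 1 / n := one_div_pos.mpr (Nat.cast_pos.mpr hn)
  have hε : 0 ≤ ε := (norm_nonneg _).trans hpb.le
  have hψ : Continuous fun t : ℝ => max (t - ε) 0 ^ ((1 : ℝ) / n) :=
    (Real.continuous_rpow_const hexp.le).comp (by fun_prop)
  refine re_map_cfc_le_of_norm_sub_lt τ hτpos hτ1 hτtr hp hb hpb hψ.continuousOn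
    (fun t _ => by positivity) (fun t ht => ?_) (fun t _ ht => ?_) hd
  · have : t ≤ 1 :=
      ((le_algebraMap_iff_spectrum_le hp).mp hp.le_algebraMap_norm_self t ht).trans hp₁
    exact Real.rpow_le_one (le_max_right _ _) (max_le (by linarith) zero_le_one) hexp.le
  · simp only [max_eq_right (sub_nonpos.mpr ht)]; exact Real.zero_rpow hexp.ne'

end Trace

end CStarAlgebra

theorem dimension_function_shift_estimate_general {A : Type*} [CStarAlgebra A]
    [PartialOrder A] [StarOrderedRing A]
    (τ : A →ₗ[ℂ] ℂ) (hτpos : ∀ x : A, 0 ≤ x → 0 ≤ τ x) (hτ1 : τ 1 = 1)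
    (hτtr : ∀ x y : A, τ (x * y) = τ (y * x))
    (α : A ≃ₐ[ℂ] A) (hstar : ∀ x : A, α (star x) = star (α x)) (m : ℕ)
    (hfix : ∀ x : A, τ ((α ^ m) x) = τ x)
    (k : ℕ) (e : Fin k → A) (hpos : ∀ i, 0 ≤ e i) (hcontr : ∀ i, ‖e i‖ ≤ 1)
    (δ : ℝ)
    (hclose : ∀ (i : Fin k) (h : (i : ℕ) + 1 < k), ‖α (e i) - e ⟨(i : ℕ) + 1, h⟩‖ < δ)
    (i : Fin k) (him : (i : ℕ) + m < k) (d₁ d₂ : ℝ)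
    (hd₁ : Tendsto (fun n : ℕ => (τ (cfc (fun t : ℝ => t ^ ((1:ℝ) / n))
        (cfc (fun t : ℝ => max (t - m * δ) 0) (e i)))).re) atTop (nhds d₁))
    (hd₂ : Tendsto (fun n : ℕ => (τ (cfc (fun t : ℝ => t ^ ((1:ℝ) / n))
        (e ⟨(i : ℕ) + m, him⟩))).re) atTop (nhds d₂)) :
    d₁ ≤ d₂ := by
  rcases Nat.eq_zero_or_pos m with rfl | hm
  · have hpos_part : cfc (fun t : ℝ => max (t - (0 : ℕ) * δ) 0) (e i) = e i := by
      simpa using cfc_congr (fun t ht => max_eq_left (spectrum_nonneg_of_nonneg (hpos i) ht))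
        |>.trans (cfc_id' ℝ (e i))
    rw [hpos_part] at hd₁
    exact (tendsto_nhds_unique hd₁ (by simpa using hd₂)).le
  set β := StarAlgEquiv.ofAlgEquiv α hstar ^ m
  have hβ : ∀ x, β x = (α ^ m) x := fun x => by
    simp only [β, StarAlgEquiv.coe_pow, AlgEquiv.coe_pow]; rfl
  have hp : IsSelfAdjoint ((α ^ m) (e i)) := by
    rw [← hβ]; exact (hpos i).isSelfAdjoint.map _
  have hp₁ : ‖(α ^ m) (e i)‖ ≤ 1 := by
    rw [← hβ, NonUnitalStarAlgHom.norm_map β β.injective]; exact hcontr i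
  refine le_of_tendsto hd₁ (eventually_atTop.mpr ⟨1, fun n hn => ?_⟩)
  calc (τ (cfc (fun t : ℝ => t ^ ((1 : ℝ) / n)) (cfc (fun t : ℝ => max (t - m * δ) 0) (e i)))).re
      = (τ (cfc (fun t : ℝ => max (t - m * δ) 0 ^ ((1 : ℝ) / n)) ((α ^ m) (e i)))).re := by
        rw [← cfc_comp' .., ← hβ, ← StarAlgHomClass.map_cfc β _ (e i), hβ, hfix]
    _ ≤ d₂ := re_map_cfc_rpow_posPart_le τ hτpos hτ1 hτtr hp hp₁ (hpos _)
        (norm_algEquiv_pow_apply_sub_lt α hstar e hclose hm him) hn hd₂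

/-- Let `e₁, …, e_k` be pairwise orthogonal positive contractions in a unital C*-algebra,
`τ` a tracial state fixed by `α^m`, where `α` is a (star-)automorphism with
`‖α(eᵢ) − e_{i+1}‖ < δ` for `1 ≤ i ≤ k−1`.  Then for all `i` with `i + m ≤ k`:
`d_τ((eᵢ − mδ)₊) ≤ d_τ(e_{i+m})`, where `d_τ(x) = lim_n τ(x^{1/n})` (the limit values
being quantified via `Tendsto`). -/
theorem dimension_function_shift_estimate {A : Type*} [CStarAlgebra A]
    [PartialOrder A] [StarOrderedRing A]
    (τ : A →ₗ[ℂ] ℂ) (hτpos : ∀ x : A, 0 ≤ x → 0 ≤ τ x) (hτ1 : τ 1 = 1)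
    (hτtr : ∀ x y : A, τ (x * y) = τ (y * x))
    (α : A ≃ₐ[ℂ] A) (hstar : ∀ x : A, α (star x) = star (α x)) (m : ℕ)
    (hfix : ∀ x : A, τ ((α ^ m) x) = τ x)
    (k : ℕ) (e : Fin k → A) (hpos : ∀ i, 0 ≤ e i) (hcontr : ∀ i, ‖e i‖ ≤ 1)
    (horth : ∀ i j, i ≠ j → e i * e j = 0) (δ : ℝ) (hδ : 0 < δ)
    (hclose : ∀ (i : Fin k) (h : (i : ℕ) + 1 < k), ‖α (e i) - e ⟨(i : ℕ) + 1, h⟩‖ < δ)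
    (i : Fin k) (him : (i : ℕ) + m < k) (d₁ d₂ : ℝ)
    (hd₁ : Tendsto (fun n : ℕ => (τ (cfc (fun t : ℝ => t ^ ((1:ℝ) / n))
        (cfc (fun t : ℝ => max (t - m * δ) 0) (e i)))).re) atTop (nhds d₁))
    (hd₂ : Tendsto (fun n : ℕ => (τ (cfc (fun t : ℝ => t ^ ((1:ℝ) / n))
        (e ⟨(i : ℕ) + m, him⟩))).re) atTop (nhds d₂)) :
    d₁ ≤ d₂ :=
  dimension_function_shift_estimate_general τ hτpos hτ1 hτtr α hstar m hfix k e hpos hcontr δ hclose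
    i him d₁ d₂ hd₁ hd₂
end
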